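/- Let G be a connected graph on n ≥ 2 vertices with maximum degree Δ and degrees d₁ ≥ ... ≥ d_n. Then for each 1 ≤ i ≤ n, the signless Laplacian spectral radius satisfies ρ(Q(G)) ≤ (d₁ + 2d_i − 1 + √((2d_i − d₁ + 1)² + 8·Σ_{k=1}^{i−1}(d_k − d_i)))/2. -/

import Mathlib

/-! If `Q x = z x` with `x ≠ 0`, then `y = |x|` satisfies `|z| y ≤ Q y` entrywise. For such a
nonnegative subinvariant vector with largest entry `M = y u` and total weight `Y`, the row at `u`
gives `(r - d₁ + 1) M ≤ Y`, while summing all rows counts every edge twice and gives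
`r Y ≤ 2 ∑ d_v y_v ≤ 2 (d_i Y + M ∑_{k<i} (d_k - d_i))`. For `r ≥ 2 d_i` the two combine to
`(r - 2 d_i) (r - d₁ + 1) ≤ 2 ∑_{k<i} (d_k - d_i)`, and the bound is the larger root of this
quadratic. -/

open Matrix Finset Real

/-- Spectral radius: largest modulus of a complex eigenvalue (root of the
characteristic polynomial). -/
noncomputable def specRad {n : ℕ} (A : Matrix (Fin n) (Fin n) ℝ) : ℝ :=
  (((A.map (Complex.ofReal)).charpoly.roots).map (fun z => ‖z‖)).foldr max 0

/-- Irreducibility of a nonnegative matrix. -/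
def Irred {n : ℕ} (A : Matrix (Fin n) (Fin n) ℝ) : Prop :=
  ∀ i j : Fin n, ∃ k : ℕ, 0 < (A ^ k) i j

theorem Multiset.foldr_max_le {α : Type*} [LinearOrder α] {s : Multiset α} {b B : α}
    (hb : b ≤ B) (h : ∀ x ∈ s, x ≤ B) : s.foldr max b ≤ B := by
  induction s using Multiset.induction_on with
  | empty => exact hb
  | cons a s ih =>
    rw [Multiset.foldr_cons]
    exact max_le (h a (Multiset.mem_cons_self a s))
      (ih fun x hx => h x (Multiset.mem_cons_of_mem hx))

theorem specRad_le {n : ℕ} {A : Matrix (Fin n) (Fin n) ℝ} {B : ℝ} (hB : 0 ≤ B)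
    (h : ∀ z ∈ (A.map Complex.ofReal).charpoly.roots, ‖z‖ ≤ B) : specRad A ≤ B :=
  Multiset.foldr_max_le hB fun _ hx => by
    obtain ⟨z, hz, rfl⟩ := Multiset.mem_map.mp hx
    exact h z hz

theorem Matrix.exists_mulVec_eq_smul_of_isRoot_charpoly {K ι : Type*} [Field K] [Fintype ι]
    [DecidableEq ι] {A : Matrix ι ι K} {z : K} (hz : A.charpoly.IsRoot z) :
    ∃ x ≠ 0, A *ᵥ x = z • x := by
  rw [Polynomial.IsRoot, eval_charpoly] at hz
  obtain ⟨x, hx0, hx⟩ := exists_mulVec_eq_zero_iff.mpr hz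
  refine ⟨x, hx0, ?_⟩
  rw [sub_mulVec, sub_eq_zero] at hx
  ext i
  simp [← hx, mulVec_diagonal]

theorem Matrix.norm_smul_norm_le_mulVec_norm {ι : Type*} [Fintype ι] {A : Matrix ι ι ℝ}
    (hA : ∀ i j, 0 ≤ A i j) {z : ℂ} {x : ι → ℂ} (hx : A.map Complex.ofReal *ᵥ x = z • x) :
    ‖z‖ • (fun i => ‖x i‖) ≤ A *ᵥ fun i => ‖x i‖ := by
  intro i
  calc ‖z‖ * ‖x i‖ = ‖∑ j, (A i j : ℂ) * x j‖ := by
        rw [← norm_mul, ← smul_eq_mul, ← Pi.smul_apply, ← hx]; rfl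
    _ ≤ ∑ j, ‖(A i j : ℂ) * x j‖ := norm_sum_le _ _
    _ = (A *ᵥ fun i => ‖x i‖) i := by
        simp only [norm_mul, Complex.norm_real, Real.norm_of_nonneg (hA i _)]; rfl

theorem left_le_quadratic_root {p q s : ℝ} (hs : 0 ≤ s) :
    p ≤ (p + q + √((p - q) ^ 2 + 4 * s)) / 2 := by
  have : |p - q| ≤ √((p - q) ^ 2 + 4 * s) := by
    rw [← Real.sqrt_sq_eq_abs]; exact Real.sqrt_le_sqrt (by linarith)
  linarith [le_abs_self (p - q)]

theorem le_quadratic_root {p q s r : ℝ} (hs : 0 ≤ s) (h : p ≤ r → (r - p) * (r - q) ≤ s) :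
    r ≤ (p + q + √((p - q) ^ 2 + 4 * s)) / 2 := by
  rcases lt_or_ge r p with hrp | hpr
  · exact hrp.le.trans (left_le_quadratic_root hs)
  · have : |2 * r - p - q| ≤ √((p - q) ^ 2 + 4 * s) := by
      rw [← Real.sqrt_sq_eq_abs]; exact Real.sqrt_le_sqrt (by nlinarith [h hpr])
    linarith [le_abs_self (2 * r - p - q)]

theorem Finset.sum_mul_le_of_antitone {ι : Type*} [Fintype ι] [LinearOrder ι]
    [LocallyFiniteOrderBot ι] {d y : ι → ℝ} (hd : Antitone d) (hy : 0 ≤ y) {M : ℝ}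
    (hM : ∀ v, y v ≤ M) (i : ι) :
    ∑ v, d v * y v ≤ d i * ∑ v, y v + M * ∑ k ∈ Iio i, (d k - d i) := by
  have hsplit : ∑ v, d v * y v - d i * ∑ v, y v
      = ∑ v ∈ Iio i, (d v - d i) * y v + ∑ v ∈ (Iio i)ᶜ, (d v - d i) * y v := by
    rw [sum_add_sum_compl, mul_sum, ← sum_sub_distrib]
    exact sum_congr rfl fun v _ => by ring
  have hlow : ∑ v ∈ Iio i, (d v - d i) * y v ≤ M * ∑ k ∈ Iio i, (d k - d i) := by
    rw [mul_sum]
    refine sum_le_sum fun v hv => ?_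
    rw [mul_comm M]
    exact mul_le_mul_of_nonneg_left (hM v) (sub_nonneg.mpr (hd (mem_Iio.mp hv).le))
  have hhigh : ∑ v ∈ (Iio i)ᶜ, (d v - d i) * y v ≤ 0 := by
    refine sum_nonpos fun v hv => mul_nonpos_of_nonpos_of_nonneg ?_ (hy v)
    rw [mem_compl, mem_Iio, not_lt] at hv
    exact sub_nonpos.mpr (hd hv)
  linarith

namespace SimpleGraph

variable {V : Type*} [Fintype V] [DecidableEq V] (G : SimpleGraph V) [DecidableRel G.Adj]

def signlessLapMatrix (R : Type*) [AddMonoidWithOne R] : Matrix V V R :=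
  G.degMatrix R + G.adjMatrix R

variable {G}

theorem signlessLapMatrix_mulVec_apply {R : Type*} [NonAssocSemiring R] (y : V → R) (v : V) :
    (G.signlessLapMatrix R *ᵥ y) v = G.degree v * y v + ∑ w ∈ G.neighborFinset v, y w := by
  rw [signlessLapMatrix, add_mulVec, Pi.add_apply, degMatrix_mulVec_apply,
    adjMatrix_mulVec_apply]

theorem sum_signlessLapMatrix_mulVec {R : Type*} [CommSemiring R] (y : V → R) :
    ∑ v, (G.signlessLapMatrix R *ᵥ y) v = 2 * ∑ v, G.degree v * y v := by
  have hadj : ∑ v, (G.adjMatrix R *ᵥ y) v = ∑ v, G.degree v * y v := by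
    rw [← one_dotProduct, dotProduct_mulVec]
    refine sum_congr rfl fun v _ => ?_
    simp [adjMatrix_vecMul_apply]
  simp only [signlessLapMatrix, add_mulVec, Pi.add_apply, sum_add_distrib, hadj,
    degMatrix_mulVec_apply]
  ring

theorem signlessLapMatrix_nonneg {R : Type*} [Semiring R] [PartialOrder R] [IsOrderedRing R]
    (v w : V) : 0 ≤ G.signlessLapMatrix R v w := by
  rw [signlessLapMatrix, degMatrix, Matrix.add_apply, diagonal_apply, adjMatrix_apply]
  apply add_nonneg <;> split_ifs <;> simp

theorem add_sum_neighborFinset_le_sum {y : V → ℝ} (hy : 0 ≤ y) (u : V) :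
    y u + ∑ w ∈ G.neighborFinset u, y w ≤ ∑ v, y v := by
  rw [← sum_insert (G.notMem_neighborFinset_self u)]
  exact sum_le_univ_sum_of_nonneg hy

theorem sub_mul_sub_le_of_smul_le_signlessLapMatrix_mulVec [LinearOrder V]
    [LocallyFiniteOrderBot V] (hdeg : Antitone fun v => G.degree v) {Δ : ℕ}
    (hΔ : ∀ v, G.degree v ≤ Δ) {r : ℝ} {y : V → ℝ} (hy0 : y ≠ 0) (hy : 0 ≤ y)
    (hsub : r • y ≤ G.signlessLapMatrix ℝ *ᵥ y) (i : V) (hr : 2 * (G.degree i : ℝ) ≤ r) :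
    (r - 2 * G.degree i) * (r - (Δ - 1)) ≤
      2 * ∑ k ∈ Iio i, ((G.degree k : ℝ) - G.degree i) := by
  set S := ∑ k ∈ Iio i, ((G.degree k : ℝ) - G.degree i)
  set Y := ∑ v, y v
  obtain ⟨u, -, hu⟩ := exists_max_image univ y ⟨i, mem_univ i⟩
  have hM : 0 < y u := by
    refine (hy u).lt_of_ne fun h => hy0 (funext fun v => ?_)
    exact le_antisymm (h ▸ hu v (mem_univ v)) (hy v)
  have htotal : r * Y ≤ 2 * (G.degree i * Y + y u * S) := by
    calc r * Y = ∑ v, (r • y) v := by simp [Y, mul_sum]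
      _ ≤ ∑ v, (G.signlessLapMatrix ℝ *ᵥ y) v := sum_le_sum fun v _ => hsub v
      _ = 2 * ∑ v, G.degree v * y v := sum_signlessLapMatrix_mulVec y
      _ ≤ 2 * (G.degree i * Y + y u * S) := by
        gcongr
        exact sum_mul_le_of_antitone (fun _ _ h => Nat.cast_le.mpr (hdeg h)) hy
          (fun v => hu v (mem_univ v)) i
  have hrow : (r - (Δ - 1)) * y u ≤ Y := by
    have h := hsub u
    rw [Pi.smul_apply, smul_eq_mul, signlessLapMatrix_mulVec_apply] at h
    have hΔu : (G.degree u : ℝ) ≤ Δ := Nat.cast_le.mpr (hΔ u)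
    nlinarith [add_sum_neighborFinset_le_sum (G := G) hy u]
  refine le_of_mul_le_mul_right ?_ hM
  nlinarith [mul_le_mul_of_nonneg_left hrow (sub_nonneg.mpr hr)]

end SimpleGraph

open SimpleGraph in
theorem stmt_10 {n : ℕ} (hn : 2 ≤ n) (G : SimpleGraph (Fin n)) [DecidableRel G.Adj]
    (hord : ∀ i j : Fin n, i ≤ j → G.degree j ≤ G.degree i) :
    ∀ i : Fin n,
      specRad (Matrix.diagonal (fun i => (G.degree i : ℝ)) + G.adjMatrix ℝ) ≤
        ((G.degree (⟨0, by omega⟩ : Fin n) : ℝ) + 2 * (G.degree i : ℝ) - 1 +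
          Real.sqrt ((2 * (G.degree i : ℝ) - (G.degree (⟨0, by omega⟩ : Fin n) : ℝ) + 1) ^ 2 +
            8 * ∑ k ∈ Finset.Iio i, ((G.degree k : ℝ) - (G.degree i : ℝ)))) / 2 := by
  intro i
  set d₁ := G.degree (⟨0, by omega⟩ : Fin n)
  have hS : 0 ≤ 2 * ∑ k ∈ Iio i, ((G.degree k : ℝ) - G.degree i) :=
    mul_nonneg zero_le_two <| sum_nonneg fun k hk =>
      sub_nonneg.mpr (Nat.cast_le.mpr (hord k i (mem_Iio.mp hk).le))
  have hbound : ((d₁ : ℝ) + 2 * G.degree i - 1 + √((2 * G.degree i - d₁ + 1) ^ 2 +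
      8 * ∑ k ∈ Iio i, ((G.degree k : ℝ) - G.degree i))) / 2
      = (2 * G.degree i + (d₁ - 1) + √((2 * G.degree i - (d₁ - 1)) ^ 2 +
        4 * (2 * ∑ k ∈ Iio i, ((G.degree k : ℝ) - G.degree i)))) / 2 := by
    ring_nf
  rw [hbound]
  have hdi : (0 : ℝ) ≤ 2 * G.degree i := by positivity
  refine specRad_le (hdi.trans (left_le_quadratic_root hS)) fun z hz => ?_
  obtain ⟨x, hx0, hx⟩ :=
    exists_mulVec_eq_smul_of_isRoot_charpoly (Polynomial.isRoot_of_mem_roots hz)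
  refine le_quadratic_root hS <| sub_mul_sub_le_of_smul_le_signlessLapMatrix_mulVec
    hord (fun v => hord _ v (Nat.zero_le _)) ?_ (fun v => norm_nonneg (x v))
    (norm_smul_norm_le_mulVec_norm signlessLapMatrix_nonneg hx) i
  simpa [funext_iff] using hx0
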